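/- arXiv:1309.1941 — 3 statements merged into one kernel-verified Lean document; each statement's English description precedes it below -/
import Mathlib

section
/- Let P and Q be graph polynomials with integer coefficients. The following are equivalent: (i) for every pair of similar graphs G₁, G₂, if P(G₁;X)=P(G₂;X) then Q(G₁;X)=Q(G₂;X); (ii) there exists a function F : ℕ × ℕ × ℕ × ℤ[X] → ℤ[X] such that for every finite simple graph G one has F(n(G), m(G), k(G), P(G;X)) = Q(G;X). -/
open Polynomial

noncomputable def numEdges {n : ℕ} (G : SimpleGraph (Fin n)) : ℕ := G.edgeSet.ncard

noncomputable def numComponents {n : ℕ} (G : SimpleGraph (Fin n)) : ℕ :=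
  Nat.card G.ConnectedComponent

def SimilarGraphs {n₁ n₂ : ℕ} (G₁ : SimpleGraph (Fin n₁)) (G₂ : SimpleGraph (Fin n₂)) : Prop :=
  n₁ = n₂ ∧ numEdges G₁ = numEdges G₂ ∧ numComponents G₁ = numComponents G₂

def IsGraphPolynomial (P : ∀ n : ℕ, SimpleGraph (Fin n) → Polynomial ℤ) : Prop :=
  ∀ (n : ℕ) (G H : SimpleGraph (Fin n)), Nonempty (G ≃g H) → P n G = P n H

def DPEquiv (P Q : ∀ n : ℕ, SimpleGraph (Fin n) → Polynomial ℤ) : Prop :=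
  ∀ (n₁ n₂ : ℕ) (G₁ : SimpleGraph (Fin n₁)) (G₂ : SimpleGraph (Fin n₂)),
    SimilarGraphs G₁ G₂ → (P n₁ G₁ = P n₂ G₂ ↔ Q n₁ G₁ = Q n₂ G₂)

/-! Condition (i) says that `G ↦ Q(G)` is constant on the fibres of
`G ↦ (n(G), m(G), k(G), P(G))`, which is exactly the condition for it to factor through that map. -/

noncomputable def graphProfile (P : ∀ n : ℕ, SimpleGraph (Fin n) → Polynomial ℤ) :
    (Σ n : ℕ, SimpleGraph (Fin n)) → ℕ × ℕ × ℕ × Polynomial ℤ :=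
  fun G => (G.1, numEdges G.2, numComponents G.2, P G.1 G.2)

theorem graphProfile_eq_iff (P : ∀ n : ℕ, SimpleGraph (Fin n) → Polynomial ℤ) {n₁ n₂ : ℕ}
    (G₁ : SimpleGraph (Fin n₁)) (G₂ : SimpleGraph (Fin n₂)) :
    graphProfile P ⟨n₁, G₁⟩ = graphProfile P ⟨n₂, G₂⟩ ↔
      SimilarGraphs G₁ G₂ ∧ P n₁ G₁ = P n₂ G₂ := by
  simp only [graphProfile, Prod.mk.injEq, SimilarGraphs, and_assoc]

theorem factorsThrough_graphProfile_iff (P Q : ∀ n : ℕ, SimpleGraph (Fin n) → Polynomial ℤ) :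
    (fun G : Σ n : ℕ, SimpleGraph (Fin n) => Q G.1 G.2).FactorsThrough (graphProfile P) ↔
      ∀ (n₁ n₂ : ℕ) (G₁ : SimpleGraph (Fin n₁)) (G₂ : SimpleGraph (Fin n₂)),
        SimilarGraphs G₁ G₂ → P n₁ G₁ = P n₂ G₂ → Q n₁ G₁ = Q n₂ G₂ := by
  simp only [Function.FactorsThrough, Sigma.forall, graphProfile_eq_iff, and_imp]
  exact ⟨fun h n₁ n₂ G₁ G₂ => h n₁ G₁ n₂ G₂, fun h n₁ G₁ n₂ G₂ => h n₁ n₂ G₁ G₂⟩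

theorem stmt_0_general (P Q : ∀ n : ℕ, SimpleGraph (Fin n) → Polynomial ℤ) :
    (∀ (n₁ n₂ : ℕ) (G₁ : SimpleGraph (Fin n₁)) (G₂ : SimpleGraph (Fin n₂)),
        SimilarGraphs G₁ G₂ → P n₁ G₁ = P n₂ G₂ → Q n₁ G₁ = Q n₂ G₂) ↔
    (∃ F : ℕ × ℕ × ℕ × Polynomial ℤ → Polynomial ℤ,
        ∀ (n : ℕ) (G : SimpleGraph (Fin n)),
          F (n, numEdges G, numComponents G, P n G) = Q n G) := by
  rw [← factorsThrough_graphProfile_iff, Function.factorsThrough_iff]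
  simp only [funext_iff, Function.comp_apply, Sigma.forall, graphProfile, eq_comm]

/-- For graph polynomials P and Q with integer coefficients, the following are
equivalent: (i) for every pair of similar graphs, equality of the P-polynomials implies
equality of the Q-polynomials; (ii) there is a function F with
F(n(G), m(G), k(G), P(G;X)) = Q(G;X) for every graph G. -/
theorem stmt_0 (P Q : ∀ n : ℕ, SimpleGraph (Fin n) → Polynomial ℤ)
    (hP : IsGraphPolynomial P) (hQ : IsGraphPolynomial Q) :
    (∀ (n₁ n₂ : ℕ) (G₁ : SimpleGraph (Fin n₁)) (G₂ : SimpleGraph (Fin n₂)),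
        SimilarGraphs G₁ G₂ → P n₁ G₁ = P n₂ G₂ → Q n₁ G₁ = Q n₂ G₂) ↔
    (∃ F : ℕ × ℕ × ℕ × Polynomial ℤ → Polynomial ℤ,
        ∀ (n : ℕ) (G : SimpleGraph (Fin n)),
          F (n, numEdges G, numComponents G, P n G) = Q n G) :=
  stmt_0_general P Q
end

section
/- Let F be a forest (a finite simple acyclic graph) with n vertices. Then the characteristic polynomial of the adjacency matrix of F equals the matching defect polynomial of F, i.e. det(X·I − A_F) = ∑_{k=0}^{⌊n/2⌋} (−1)^k m_k(F) X^{n−2k}. -/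
open Polynomial

/-- A finset of edges is a matching set: the edges belong to the graph and are pairwise
vertex-disjoint. -/
def IsMatchingSet {V : Type*} (G : SimpleGraph V) (M : Finset (Sym2 V)) : Prop :=
  (↑M : Set (Sym2 V)) ⊆ G.edgeSet ∧
    ∀ e ∈ M, ∀ f ∈ M, e ≠ f → ∀ v : V, ¬(v ∈ e ∧ v ∈ f)

/-- The number of matchings of size k in G. -/
noncomputable def matchCount {V : Type*} [Fintype V] (G : SimpleGraph V) (k : ℕ) : ℕ :=
  Set.ncard {M : Finset (Sym2 V) | IsMatchingSet G M ∧ M.card = k}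

/-!
Expand `det (X • 1 - A)` by the Leibniz formula. The term of a permutation `σ` vanishes unless
`σ` moves every vertex to a neighbour. In a forest such a `σ` is an involution, since a longer
cycle of `σ` would give a cycle in the graph; so `σ` is a product of disjoint transpositions along
edges, that is, a matching `M`, and its term is `sign σ * (-1) ^ (2 * #M) * X ^ (n - 2 * #M)`
with `sign σ = (-1) ^ #M`.
-/

open Finset

namespace Equiv.Perm

variable {V : Type*} [Fintype V] [DecidableEq V] {σ : Perm V}

def movedPairs (σ : Perm V) : Finset (Sym2 V) :=
  σ.support.image fun v => s(v, σ v)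

lemma mem_movedPairs {e : Sym2 V} :
    e ∈ σ.movedPairs ↔ ∃ v, σ v ≠ v ∧ s(v, σ v) = e := by
  simp [movedPairs]

lemma mk_mem_movedPairs {v : V} (hv : σ v ≠ v) : s(v, σ v) ∈ σ.movedPairs :=
  mem_movedPairs.2 ⟨v, hv, rfl⟩

lemma eq_mk_of_mem_movedPairs (hσ : Function.Involutive σ) {e : Sym2 V}
    (he : e ∈ σ.movedPairs) {v : V} (hv : v ∈ e) : e = s(v, σ v) ∧ σ v ≠ v := by
  obtain ⟨u, hu, rfl⟩ := mem_movedPairs.1 he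
  rcases Sym2.mem_iff.1 hv with rfl | rfl
  · exact ⟨rfl, hu⟩
  · exact ⟨by rw [hσ u, Sym2.eq_swap], by rw [hσ u]; exact hu.symm⟩

lemma card_support_eq_two_mul_card_movedPairs (hσ : Function.Involutive σ) :
    #σ.support = 2 * #σ.movedPairs := by
  rw [card_eq_sum_card_image (fun v => s(v, σ v)), mul_comm, ← movedPairs]
  refine sum_const_nat fun e he => ?_
  obtain ⟨v, hv, rfl⟩ := mem_movedPairs.1 he
  have : {u ∈ σ.support | s(u, σ u) = s(v, σ v)} = {v, σ v} := by
    ext u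
    simp only [mem_filter, mem_support, mem_insert, mem_singleton, Sym2.eq_iff]
    constructor
    · rintro ⟨-, ⟨rfl, -⟩ | ⟨rfl, -⟩⟩ <;> simp
    · rintro (rfl | rfl)
      · exact ⟨hv, .inl ⟨rfl, rfl⟩⟩
      · exact ⟨by rwa [hσ, ne_comm], .inr ⟨rfl, hσ v⟩⟩
  rw [this, card_pair hv.symm]

lemma sign_eq_neg_one_pow_card_movedPairs (hσ : Function.Involutive σ) :
    sign σ = (-1) ^ #σ.movedPairs := by
  have hsq : σ ^ 2 = 1 := Equiv.ext fun v => by simp [sq, hσ v]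
  rw [sign_of_pow_two_eq_one hsq, card_fixedPoints, sum_cycleType,
    Nat.sub_sub_self (card_le_univ _), card_support_eq_two_mul_card_movedPairs hσ,
    Nat.mul_div_cancel_left _ two_pos]

end Equiv.Perm

namespace SimpleGraph

variable {V : Type*} {G : SimpleGraph V}

def MovesAlongEdges (G : SimpleGraph V) (σ : Equiv.Perm V) : Prop :=
  ∀ v, σ v ≠ v → G.Adj v (σ v)

/-- If `σ (σ v) ≠ v`, the orbit of `σ v` under `σ` leads back to `v` without using the edge
`s(v, σ v)`, so that edge is not a bridge. -/
theorem IsAcyclic.involutive_of_movesAlongEdges [Finite V] (hG : G.IsAcyclic)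
    {σ : Equiv.Perm V} (hσ : G.MovesAlongEdges σ) : Function.Involutive σ := by
  intro v
  by_contra hvv
  have hv : σ v ≠ v := fun h => hvv (by rw [h, h])
  set H := G.deleteEdges {s(v, σ v)}
  have reach : ∀ k, H.Reachable (σ v) ((σ ^ (k + 1)) v) := by
    intro k
    induction k with
    | zero => simp
    | succ k ih =>
      rw [pow_succ', Equiv.Perm.mul_apply]
      set w := (σ ^ (k + 1)) v
      by_cases hwv : w = v
      · rw [hwv]
      by_cases hw : σ w = w
      · rwa [hw]
      refine ih.trans (Adj.reachable ?_)
      rw [deleteEdges_adj, Set.mem_singleton_iff, Sym2.eq_iff]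
      refine ⟨hσ w hw, ?_⟩
      rintro (⟨h, -⟩ | ⟨h, h'⟩)
      exacts [hwv h, hvv (h ▸ h')]
  have hbridge := isAcyclic_iff_forall_adj_isBridge.1 hG (hσ v hv)
  rw [isBridge_iff] at hbridge
  apply hbridge
  have := reach (orderOf σ - 1)
  rwa [Nat.sub_add_cancel (orderOf_pos σ), pow_orderOf_eq_one, Equiv.Perm.one_apply,
    reachable_comm] at this

end SimpleGraph

section Matching

variable {V : Type*} {G : SimpleGraph V} {M : Finset (Sym2 V)}

open scoped Classical in
noncomputable def matchingPartner (M : Finset (Sym2 V)) (v : V) : V :=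
  if h : ∃ w, s(v, w) ∈ M then h.choose else v

lemma matchingPartner_of_forall_notMem {v : V} (h : ∀ w, s(v, w) ∉ M) :
    matchingPartner M v = v := by
  simp [matchingPartner, h]

namespace IsMatchingSet

lemma eq_of_mk_mem (hM : IsMatchingSet G M) {v w w' : V} (h : s(v, w) ∈ M)
    (h' : s(v, w') ∈ M) : w = w' := by
  by_contra hne
  exact hM.2 _ h _ h' (fun he => hne (Sym2.congr_right.1 he)) v
    ⟨Sym2.mem_mk_left v w, Sym2.mem_mk_left v w'⟩

lemma matchingPartner_eq (hM : IsMatchingSet G M) {v w : V} (h : s(v, w) ∈ M) :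
    matchingPartner M v = w := by
  have hex : ∃ w, s(v, w) ∈ M := ⟨w, h⟩
  rw [matchingPartner, dif_pos hex]
  exact hM.eq_of_mk_mem hex.choose_spec h

lemma matchingPartner_involutive (hM : IsMatchingSet G M) :
    Function.Involutive (matchingPartner M) := by
  intro v
  by_cases h : ∃ w, s(v, w) ∈ M
  · obtain ⟨w, hw⟩ := h
    rw [hM.matchingPartner_eq hw, hM.matchingPartner_eq (Sym2.eq_swap ▸ hw)]
  · have h := not_exists.1 h
    rw [matchingPartner_of_forall_notMem h, matchingPartner_of_forall_notMem h]

noncomputable def toPerm (hM : IsMatchingSet G M) : Equiv.Perm V :=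
  hM.matchingPartner_involutive.toPerm

lemma toPerm_apply (hM : IsMatchingSet G M) (v : V) : hM.toPerm v = matchingPartner M v := rfl

lemma mk_toPerm_mem (hM : IsMatchingSet G M) {v : V} (hv : hM.toPerm v ≠ v) :
    s(v, hM.toPerm v) ∈ M := by
  by_contra hnot
  refine hv (matchingPartner_of_forall_notMem fun w hw => hnot ?_)
  rwa [toPerm_apply, hM.matchingPartner_eq hw]

lemma movesAlongEdges_toPerm (hM : IsMatchingSet G M) : G.MovesAlongEdges hM.toPerm :=
  fun _ hv => hM.1 (hM.mk_toPerm_mem hv)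

variable [Fintype V] [DecidableEq V]

lemma movedPairs_toPerm (hM : IsMatchingSet G M) : hM.toPerm.movedPairs = M := by
  ext e
  refine ⟨fun he => ?_, fun he => ?_⟩
  · obtain ⟨v, hv, rfl⟩ := Equiv.Perm.mem_movedPairs.1 he
    exact hM.mk_toPerm_mem hv
  · induction e using Sym2.ind with
    | _ v w =>
      have hvw : v ≠ w := G.ne_of_adj (hM.1 he)
      have hpartner : hM.toPerm v = w := hM.matchingPartner_eq he
      rw [← hpartner] at he ⊢
      exact Equiv.Perm.mk_mem_movedPairs (hpartner ▸ hvw.symm)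

lemma toPerm_eq {σ : Equiv.Perm V} (hσ : Function.Involutive σ)
    (hM : IsMatchingSet G σ.movedPairs) : hM.toPerm = σ := by
  ext v
  by_cases hv : σ v = v
  · rw [hv]
    refine matchingPartner_of_forall_notMem fun w hw => ?_
    exact (Equiv.Perm.eq_mk_of_mem_movedPairs hσ hw (Sym2.mem_mk_left v w)).2 hv
  · exact hM.matchingPartner_eq (Equiv.Perm.mk_mem_movedPairs hv)

lemma two_mul_card_le (hM : IsMatchingSet G M) : 2 * #M ≤ Fintype.card V := by
  rw [← hM.movedPairs_toPerm, ← Equiv.Perm.card_support_eq_two_mul_card_movedPairs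
    hM.matchingPartner_involutive]
  exact card_le_univ _

end IsMatchingSet

lemma SimpleGraph.MovesAlongEdges.isMatchingSet_movedPairs [Fintype V] [DecidableEq V]
    {σ : Equiv.Perm V} (hσ : G.MovesAlongEdges σ) (hinv : Function.Involutive σ) :
    IsMatchingSet G σ.movedPairs := by
  refine ⟨fun e he => ?_, fun e he f hf hef v ⟨hve, hvf⟩ => hef ?_⟩
  · obtain ⟨v, hv, rfl⟩ := Equiv.Perm.mem_movedPairs.1 he
    exact hσ v hv
  · exact (Equiv.Perm.eq_mk_of_mem_movedPairs hinv he hve).1.trans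
      (Equiv.Perm.eq_mk_of_mem_movedPairs hinv hf hvf).1.symm

end Matching

namespace SimpleGraph

open Matrix

variable {V : Type*} [Fintype V] [DecidableEq V] {G : SimpleGraph V}

open scoped Classical in
lemma sum_isMatchingSet_eq_sum_range {A : Type*} [AddCommMonoid A] (f : ℕ → A) :
    ∑ M with IsMatchingSet G M, f #M =
      ∑ k ∈ range (Fintype.card V / 2 + 1), matchCount G k • f k := by
  have hcard : ∀ M ∈ ({M | IsMatchingSet G M} : Finset _),
      #M ∈ range (Fintype.card V / 2 + 1) :=
    fun M hM => mem_range.2 <| by have := (mem_filter.1 hM).2.two_mul_card_le; omega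
  rw [← sum_fiberwise_of_maps_to' hcard]
  refine sum_congr rfl fun k _ => ?_
  rw [sum_const, filter_filter, matchCount, ← Set.ncard_coe_finset]
  congr
  ext M
  simp

variable [DecidableRel G.Adj] {R : Type*} [CommRing R] {σ : Equiv.Perm V}

lemma prod_charmatrix_adjMatrix_eq_zero (hσ : ¬ G.MovesAlongEdges σ) :
    ∏ v, charmatrix (G.adjMatrix R) (σ v) v = 0 := by
  obtain ⟨v, hv, hadj⟩ : ∃ v, σ v ≠ v ∧ ¬ G.Adj v (σ v) := by
    simpa [MovesAlongEdges] using hσ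
  refine prod_eq_zero (mem_univ v) ?_
  rw [charmatrix_apply_ne _ _ _ hv, adjMatrix_apply, if_neg (fun h => hadj h.symm)]
  simp

lemma prod_charmatrix_adjMatrix (hσ : G.MovesAlongEdges σ) :
    ∏ v, charmatrix (G.adjMatrix R) (σ v) v =
      (-1) ^ #σ.support * X ^ (Fintype.card V - #σ.support) := by
  rw [← prod_mul_prod_compl σ.support, ← card_compl]
  congr 1
  · refine prod_eq_pow_card fun v hv => ?_
    rw [Equiv.Perm.mem_support] at hv
    rw [charmatrix_apply_ne _ _ _ hv, adjMatrix_apply, if_pos (hσ v hv).symm]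
    simp
  · refine prod_eq_pow_card fun v hv => ?_
    rw [mem_compl, Equiv.Perm.notMem_support] at hv
    rw [hv, charmatrix_apply_eq, adjMatrix_apply, if_neg (G.loopless.irrefl v)]
    simp

open scoped Classical in
lemma charpoly_adjMatrix_eq_sum_movesAlongEdges :
    (G.adjMatrix R).charpoly = ∑ σ with G.MovesAlongEdges σ,
      Equiv.Perm.sign σ • ((-1) ^ #σ.support * X ^ (Fintype.card V - #σ.support)) := by
  have hvanish : ∀ σ ∈ univ,
      Equiv.Perm.sign σ • ∏ v, charmatrix (G.adjMatrix R) (σ v) v ≠ 0 → G.MovesAlongEdges σ :=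
    fun σ _ h => by_contra fun hσ =>
      h (by rw [prod_charmatrix_adjMatrix_eq_zero hσ, smul_zero])
  rw [charpoly, det_apply, ← sum_filter_of_ne hvanish]
  exact sum_congr rfl fun σ hσ => by rw [prod_charmatrix_adjMatrix (mem_filter.1 hσ).2]

open scoped Classical in
theorem IsAcyclic.charpoly_adjMatrix_eq_sum_isMatchingSet (hG : G.IsAcyclic) :
    (G.adjMatrix R).charpoly =
      ∑ M with IsMatchingSet G M, (-1) ^ #M * X ^ (Fintype.card V - 2 * #M) := by
  rw [charpoly_adjMatrix_eq_sum_movesAlongEdges]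
  have hinv {σ : Equiv.Perm V} (hσ : σ ∈ ({σ | G.MovesAlongEdges σ} : Finset _)) :=
    hG.involutive_of_movesAlongEdges (mem_filter.1 hσ).2
  refine sum_bij' (fun σ _ => σ.movedPairs) (fun M hM => (mem_filter.1 hM).2.toPerm)
    (fun σ hσ =>
      mem_filter.2 ⟨mem_univ _, (mem_filter.1 hσ).2.isMatchingSet_movedPairs (hinv hσ)⟩)
    (fun M hM => mem_filter.2 ⟨mem_univ _, (mem_filter.1 hM).2.movesAlongEdges_toPerm⟩)
    (fun σ hσ => IsMatchingSet.toPerm_eq (hinv hσ) _)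
    (fun M hM => (mem_filter.1 hM).2.movedPairs_toPerm) fun σ hσ => ?_
  rw [Equiv.Perm.sign_eq_neg_one_pow_card_movedPairs (hinv hσ),
    Equiv.Perm.card_support_eq_two_mul_card_movedPairs (hinv hσ), pow_mul, neg_one_sq, one_pow,
    one_mul, Units.smul_def]
  simp

end SimpleGraph

/-- For a forest F on n vertices, the characteristic polynomial of its
adjacency matrix equals the matching defect polynomial
∑_{k=0}^{⌊n/2⌋} (−1)^k m_k(F) X^{n−2k}. -/
theorem stmt_5 (n : ℕ) (F : SimpleGraph (Fin n)) [DecidableRel F.Adj]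
    (hF : F.IsAcyclic) :
    (F.adjMatrix ℤ).charpoly =
      ∑ k ∈ Finset.range (n / 2 + 1),
        C ((-1) ^ k * (matchCount F k : ℤ)) * X ^ (n - 2 * k) := by
  rw [hF.charpoly_adjMatrix_eq_sum_isMatchingSet, Fintype.card_fin,
    SimpleGraph.sum_isMatchingSet_eq_sum_range (fun k => (-1) ^ k * X ^ (n - 2 * k)),
    Fintype.card_fin]
  refine sum_congr rfl fun k _ => ?_
  rw [nsmul_eq_mul, C_mul, C_pow, C_neg, C_1, C_eq_natCast]
  ring
end

section
/- Let r be a fixed natural number and let P be a graph polynomial with integer coefficients such that for every finite simple graph G with at least one vertex the polynomial P(G;X) = ∑_{i=0}^{d(G)} h_i(G) X^i is nonzero and satisfies |h_i(G)| ≤ n(G)^r for all i. Define P₁(G;X) = P(G; n(G)^r · X). Then P₁ is d.p.-equivalent to P (on graphs with at least one vertex), and for every such graph G every complex root ξ of P₁(G;X) satisfies |ξ| ≤ 2. -/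
/-!
Substituting `c X` with `c = n(G)^r ≥ 1` scales the `i`-th coefficient by `c^i`, which is injective
on integer polynomials, so `P` and `P₁` distinguish the same graphs. If `ξ` is a root of `P₁(G)`
then `c ξ` is a root of `P(G)`, whose coefficients are bounded by `c` while its leading coefficient
is a nonzero integer; Cauchy's bound gives `c ‖ξ‖ < c + 1 ≤ 2c`.
-/

open Polynomial

namespace Polynomial

lemma comp_C_mul_X_injective {R : Type*} [Ring R] {r : R} (hr : r ∈ nonZeroDivisors R) :
    Function.Injective fun p : R[X] ↦ p.comp (C r * X) := fun p q h ↦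
  sub_eq_zero.1 <| (comp_C_mul_X_eq_zero_iff hr).1 <| by simp only [sub_comp, h, sub_self]

open NNReal in
lemma cauchyBound_le {K : Type*} [NormedDivisionRing K] {p : K[X]} {B : ℝ≥0}
    (h : ∀ i, ‖p.coeff i‖₊ ≤ B * ‖p.leadingCoeff‖₊) : p.cauchyBound ≤ B + 1 := by
  rw [cauchyBound]
  gcongr
  exact div_le_of_le_mul₀ zero_le zero_le (Finset.sup_le fun i _ ↦ h i)

lemma norm_lt_of_aeval_eq_zero_of_abs_coeff_le {p : ℤ[X]} (hp : p ≠ 0) {B : ℕ}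
    (hB : ∀ i, |p.coeff i| ≤ B) {z : ℂ} (hz : aeval z p = 0) : ‖z‖ < B + 1 := by
  set q : ℂ[X] := p.map (Int.castRingHom ℂ)
  have hq : q ≠ 0 := (Polynomial.map_ne_zero_iff Int.cast_injective).2 hp
  have hroot : q.IsRoot z := by rwa [IsRoot, eval_map, ← algebraMap_int_eq, ← aeval_def]
  have hlc : 1 ≤ ‖q.leadingCoeff‖₊ := by
    rw [leadingCoeff_map_of_injective Int.cast_injective, ← NNReal.coe_le_coe]
    simpa [Int.norm_eq_abs] using
      (mod_cast Int.one_le_abs (leadingCoeff_ne_zero.2 hp) : (1 : ℝ) ≤ |(p.leadingCoeff : ℝ)|)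
  have hcoeff (i : ℕ) : ‖q.coeff i‖₊ ≤ B * ‖q.leadingCoeff‖₊ := by
    refine le_mul_of_le_of_one_le ?_ hlc
    rw [coeff_map, ← NNReal.coe_le_coe]
    simpa [Int.norm_eq_abs] using (mod_cast hB i : |(p.coeff i : ℝ)| ≤ B)
  exact_mod_cast (hroot.norm_lt_cauchyBound hq).trans_le (cauchyBound_le hcoeff)

lemma norm_lt_two_of_aeval_comp_C_mul_X_eq_zero {p : ℤ[X]} (hp : p ≠ 0) {c : ℕ} (hc : 0 < c)
    (hB : ∀ i, |p.coeff i| ≤ c) {ξ : ℂ} (hξ : aeval ξ (p.comp (C (c : ℤ) * X)) = 0) :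
    ‖ξ‖ < 2 := by
  rw [aeval_comp] at hξ
  have hroot : aeval (c * ξ) p = 0 := by simpa using hξ
  have hcξ : c * ‖ξ‖ < c + 1 := by
    simpa using norm_lt_of_aeval_eq_zero_of_abs_coeff_le hp hB hroot
  have hc1 : (1 : ℝ) ≤ c := by exact_mod_cast hc
  nlinarith [norm_nonneg ξ]

end Polynomial

theorem stmt_18_general (r : ℕ) (P : ∀ n : ℕ, SimpleGraph (Fin n) → Polynomial ℤ)
    (hnz : ∀ (n : ℕ), 0 < n → ∀ G : SimpleGraph (Fin n), P n G ≠ 0)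
    (hbound : ∀ (n : ℕ), 0 < n → ∀ (G : SimpleGraph (Fin n)) (i : ℕ),
        |(P n G).coeff i| ≤ (n : ℤ) ^ r)
    (P₁ : ∀ n : ℕ, SimpleGraph (Fin n) → Polynomial ℤ)
    (hP₁ : ∀ (n : ℕ) (G : SimpleGraph (Fin n)),
        P₁ n G = (P n G).comp (C ((n : ℤ) ^ r) * X)) :
    (∀ (n₁ n₂ : ℕ) (G₁ : SimpleGraph (Fin n₁)) (G₂ : SimpleGraph (Fin n₂)),
        0 < n₁ → 0 < n₂ → SimilarGraphs G₁ G₂ →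
        (P n₁ G₁ = P n₂ G₂ ↔ P₁ n₁ G₁ = P₁ n₂ G₂)) ∧
    ∀ (n : ℕ), 0 < n → ∀ (G : SimpleGraph (Fin n)) (ξ : ℂ),
      aeval ξ (P₁ n G) = 0 → ‖ξ‖ ≤ 2 := by
  refine ⟨?_, ?_⟩
  · rintro n _ G₁ G₂ hn - ⟨rfl, -, -⟩
    rw [hP₁, hP₁]
    exact (comp_C_mul_X_injective (mem_nonZeroDivisors_of_ne_zero (by positivity))).eq_iff.symm
  · intro n hn G ξ hξ
    rw [hP₁, ← Nat.cast_pow] at hξ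
    exact (norm_lt_two_of_aeval_comp_C_mul_X_eq_zero (hnz n hn G) (pow_pos hn r)
      (by exact_mod_cast hbound n hn G) hξ).le

/-- Let r ∈ ℕ and P a graph polynomial with integer coefficients such that for
every graph G with at least one vertex, P(G;X) is nonzero with all coefficients bounded by
n(G)^r in absolute value. Then P₁(G;X) = P(G; n(G)^r·X) is d.p.-equivalent to P on graphs
with at least one vertex, and every complex root ξ of P₁(G;X) satisfies |ξ| ≤ 2. -/
theorem stmt_18 (r : ℕ) (P : ∀ n : ℕ, SimpleGraph (Fin n) → Polynomial ℤ)
    (hP : IsGraphPolynomial P)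
    (hnz : ∀ (n : ℕ), 0 < n → ∀ G : SimpleGraph (Fin n), P n G ≠ 0)
    (hbound : ∀ (n : ℕ), 0 < n → ∀ (G : SimpleGraph (Fin n)) (i : ℕ),
        |(P n G).coeff i| ≤ (n : ℤ) ^ r)
    (P₁ : ∀ n : ℕ, SimpleGraph (Fin n) → Polynomial ℤ)
    (hP₁ : ∀ (n : ℕ) (G : SimpleGraph (Fin n)),
        P₁ n G = (P n G).comp (C ((n : ℤ) ^ r) * X)) :
    (∀ (n₁ n₂ : ℕ) (G₁ : SimpleGraph (Fin n₁)) (G₂ : SimpleGraph (Fin n₂)),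
        0 < n₁ → 0 < n₂ → SimilarGraphs G₁ G₂ →
        (P n₁ G₁ = P n₂ G₂ ↔ P₁ n₁ G₁ = P₁ n₂ G₂)) ∧
    ∀ (n : ℕ), 0 < n → ∀ (G : SimpleGraph (Fin n)) (ξ : ℂ),
      aeval ξ (P₁ n G) = 0 → ‖ξ‖ ≤ 2 :=
  stmt_18_general r P hnz hbound P₁ hP₁
end
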